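/- arXiv:1406.3754 — 5 statements merged into one kernel-verified Lean document; each statement's English description precedes it below -/
import Mathlib

section
/- The ratio π(x)/x tends to 0 as x tends to infinity; that is, the primes have natural density zero. -/
open Filter Real

theorem primes_density_zero :
    Filter.Tendsto (fun x : ℝ => (Nat.primeCounting ⌊x⌋₊ : ℝ) / x)
      Filter.atTop (nhds 0) := by
  have hbound : ∀ᶠ x : ℝ in atTop,
      (Nat.primeCounting ⌊x⌋₊ : ℝ) / x ≤ (log 4 + 1) / log x := by
    filter_upwards [Chebyshev.eventually_primeCounting_le one_pos, eventually_gt_atTop 0]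
      with x hπ hx
    rw [div_le_iff₀ hx]
    calc (Nat.primeCounting ⌊x⌋₊ : ℝ) ≤ (log 4 + 1) * x / log x := hπ
      _ = (log 4 + 1) / log x * x := by ring
  have hnonneg : ∀ᶠ x : ℝ in atTop, 0 ≤ (Nat.primeCounting ⌊x⌋₊ : ℝ) / x := by
    filter_upwards [eventually_ge_atTop 0] with x hx
    positivity
  exact squeeze_zero' hnonneg hbound (tendsto_const_nhds.div_atTop tendsto_log_atTop)
end

section
/- There is an absolute constant C such that |Σ_{p ≤ N, p prime} (log p)/p − log N| ≤ C for all N ≥ 1. -/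
/-!
Compute `log N!` in two ways. Since `N^N e^(-N) ≤ N! ≤ N^N`, it is `N log N + O(N)`. By Legendre,
`log N! = ∑_{p ≤ N} v_p(N!) log p` with `N/p - 1 ≤ v_p(N!) ≤ N/(p-1) = N/p + N/(p(p-1))`, so it is
`N ∑_{p ≤ N} log p / p + O(N)`: the error is at most `θ(N) ≤ N log 4` (Chebyshev) from below and
`N ∑_p log p / (p(p-1))`, a convergent series, from above. Dividing by `N` gives the theorem.
-/

open Finset Real Chebyshev
open scoped Nat

theorem Nat.div_le_factorization_factorial {p : ℕ} (hp : p.Prime) (n : ℕ) :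
    n / p ≤ (n !).factorization p := by
  rw [Nat.factorization_factorial hp (Nat.lt_add_of_pos_right two_pos)]
  simpa using single_le_sum (f := fun i => n / p ^ i) (fun _ _ => Nat.zero_le _)
    (by simp : 1 ∈ Ico 1 (Nat.log p n + 2))

lemma div_sub_one_le_factorization_factorial {p : ℕ} (hp : p.Prime) (n : ℕ) :
    (n : ℝ) / p - 1 ≤ (n !).factorization p :=
  calc (n : ℝ) / p - 1 ≤ ⌊(n : ℝ) / p⌋₊ := (Nat.sub_one_lt_floor _).le
    _ = (n / p : ℕ) := by rw [Nat.floor_div_eq_div]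
    _ ≤ (n !).factorization p := by exact_mod_cast Nat.div_le_factorization_factorial hp n

lemma factorization_factorial_le_div_sub_one {p : ℕ} (hp : p.Prime) (n : ℕ) :
    ((n !).factorization p : ℝ) ≤ n / (p - 1) :=
  calc ((n !).factorization p : ℝ) ≤ (n / (p - 1) : ℕ) := by
        exact_mod_cast Nat.factorization_factorial_le_div_pred hp n
    _ ≤ n / ((p - 1 : ℕ) : ℝ) := Nat.cast_div_le
    _ = n / (p - 1) := by rw [Nat.cast_pred hp.pos]

lemma log_factorial_eq_sum_primesLE (n : ℕ) :
    log (n ! : ℝ) = ∑ p ∈ Nat.primesLE n, (n !).factorization p * log p := by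
  rw [log_nat_eq_sum_factorization]
  refine Finsupp.sum_of_support_subset _ (fun p hp => ?_) _ (fun p _ => by simp)
  rw [Nat.support_factorization, Nat.mem_primeFactors] at hp
  exact Nat.mem_primesLE.2 ⟨(hp.1.dvd_factorial).1 hp.2.1, hp.1⟩

lemma log_factorial_le (n : ℕ) : log (n ! : ℝ) ≤ n * log n := by
  rcases n.eq_zero_or_pos with rfl | hn
  · simp
  rw [← log_pow]
  exact log_le_log (by positivity) (by exact_mod_cast n.factorial_le_pow)

lemma le_log_factorial (n : ℕ) : n * log n - n ≤ log (n ! : ℝ) := by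
  rcases n.eq_zero_or_pos with rfl | hn
  · simp
  have h := pow_div_factorial_le_exp (x := (n : ℝ)) n.cast_nonneg n
  rw [div_le_iff₀ (by positivity)] at h
  have := log_le_log (by positivity) h
  rwa [log_pow, log_mul (exp_ne_zero _) (by positivity), log_exp, ← sub_le_iff_le_add'] at this

lemma log_div_mul_sub_one_le (n : ℕ) : log n / (n * (n - 1)) ≤ 4 * (n : ℝ) ^ (-(3 / 2) : ℝ) := by
  rcases lt_or_ge n 2 with hn | hn
  · interval_cases n <;> simp
  have hn' : (2 : ℝ) ≤ n := by exact_mod_cast hn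
  calc log n / (n * (n - 1)) ≤ (n : ℝ) ^ (1 / 2 : ℝ) / (1 / 2) / (n ^ 2 / 2) := by
        gcongr
        · exact log_natCast_le_rpow_div n one_half_pos
        · nlinarith
    _ = 4 * (n : ℝ) ^ (-(3 / 2) : ℝ) := by
        rw [show (-(3 / 2) : ℝ) = 1 / 2 - 2 by norm_num, rpow_sub (by positivity), rpow_two]
        ring

lemma log_div_mul_sub_one_nonneg (n : ℕ) : 0 ≤ log n / (n * (n - 1 : ℝ)) := by
  refine div_nonneg (log_natCast_nonneg n) ?_
  rcases n with _ | n
  · simp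
  · push_cast
    rw [add_sub_cancel_right]
    positivity

lemma summable_log_div_mul_sub_one : Summable fun n : ℕ => log n / (n * (n - 1 : ℝ)) :=
  ((summable_nat_rpow.2 (by norm_num)).mul_left 4).of_nonneg_of_le log_div_mul_sub_one_nonneg
    log_div_mul_sub_one_le

lemma mul_sum_log_div_sub_theta_le_log_factorial (n : ℕ) :
    n * ∑ p ∈ Nat.primesLE n, log p / p - θ n ≤ log (n ! : ℝ) := by
  rw [theta_eq_sum_primesLE_log, log_factorial_eq_sum_primesLE, mul_sum, ← sum_sub_distrib]
  gcongr with p hp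
  have hp := (Nat.mem_primesLE.1 hp).2
  calc n * (log p / p) - log p = (n / p - 1) * log p := by field_simp
    _ ≤ (n !).factorization p * log p := by
        gcongr
        exact div_sub_one_le_factorization_factorial hp n

lemma log_factorial_le_mul_sum_log_div_add (n : ℕ) :
    log (n ! : ℝ) ≤ n * ∑ p ∈ Nat.primesLE n, log p / p
      + n * ∑ p ∈ Nat.primesLE n, log p / (p * (p - 1)) := by
  rw [log_factorial_eq_sum_primesLE, mul_sum, mul_sum, ← sum_add_distrib]
  gcongr with p hp
  have hp := (Nat.mem_primesLE.1 hp).2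
  have hp1 : (1 : ℝ) < p := by exact_mod_cast hp.one_lt
  calc (n !).factorization p * log p ≤ n / (p - 1) * log p := by
        gcongr
        exact factorization_factorial_le_div_sub_one hp n
    _ = n * (log p / p) + n * (log p / (p * (p - 1))) := by
        field_simp [(sub_pos.2 hp1).ne']
        ring

theorem mertens_first :
    ∃ C : ℝ, ∀ N : ℕ, 1 ≤ N →
      |(∑ p ∈ (Finset.range (N + 1)).filter Nat.Prime, Real.log p / p) - Real.log N| ≤ C := by
  set K := ∑' n : ℕ, log n / (n * (n - 1 : ℝ))
  refine ⟨max (log 4) (1 + K), fun N hN => ?_⟩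
  change |∑ p ∈ Nat.primesLE N, log p / p - log N| ≤ _
  set S := ∑ p ∈ Nat.primesLE N, log p / p
  have hN : (0 : ℝ) < N := by exact_mod_cast hN
  have hθ : θ N ≤ log 4 * N := theta_le_log4_mul_x N.cast_nonneg
  have hR : ∑ p ∈ Nat.primesLE N, log p / (p * (p - 1)) ≤ K :=
    summable_log_div_mul_sub_one.sum_le_tsum _ fun n _ => log_div_mul_sub_one_nonneg n
  have lower : N * (log N - 1 - K) ≤ N * S := by
    nlinarith [log_factorial_le_mul_sum_log_div_add N, le_log_factorial N]
  have upper : N * S ≤ N * (log N + log 4) := by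
    nlinarith [mul_sum_log_div_sub_theta_le_log_factorial N, log_factorial_le N]
  rw [mul_le_mul_iff_right₀ hN] at lower upper
  rw [abs_le]
  constructor <;> linarith [le_max_left (log 4) (1 + K), le_max_right (log 4) (1 + K)]
end

section
/- If the limit of π(x) / (x/log x) as x → ∞ exists, then that limit equals 1. -/
/-!
From the hypothesis, `π(x) = θ(x) / log x + O(x / log² x)` and `ψ(x) - θ(x) = O(√x)` we get
`ψ(x) = η x + o(x)`. Inserting this into Chebyshev's identity `log N! = ∑_{k ≤ N} ψ(N / k)` gives
`log N! = η ∑_{k ≤ N} ⌊N / k⌋ + o(N log N) = η N log N + o(N log N)`, whereas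
`log N! = N log N + O(N)` by Stirling. Hence `η = 1`.
-/

open scoped Nat
open Real Filter Topology Asymptotics Finset Chebyshev
open ArithmeticFunction hiding log

lemma isLittleO_sqrt_id : Real.sqrt =o[atTop] fun x => x := by
  have h := (isLittleO_const_id_atTop (1 : ℝ)).sqrt (eventually_ge_atTop 0)
  refine ((isBigO_refl Real.sqrt atTop).mul_isLittleO h).congr' ?_ ?_
  · filter_upwards with x
    simp
  · filter_upwards [eventually_ge_atTop 0] with x hx
    simp [Real.mul_self_sqrt hx]

lemma isLittleO_div_log_id : (fun x => x / log x) =o[atTop] fun x => x := by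
  have h : (fun x => (log x)⁻¹) =o[atTop] (fun _ => (1 : ℝ)) :=
    (isLittleO_one_iff ℝ).2 tendsto_log_atTop.inv_tendsto_atTop
  simpa [div_eq_mul_inv] using (isBigO_refl (fun x : ℝ => x) atTop).mul_isLittleO h

lemma isLittleO_psi_sub_mul_of_tendsto_primeCounting {η : ℝ}
    (h : Tendsto (fun x : ℝ => (Nat.primeCounting ⌊x⌋₊ : ℝ) / (x / log x)) atTop (𝓝 η)) :
    (fun x => ψ x - η * x) =o[atTop] fun x => x := by
  have hlog : ∀ᶠ x : ℝ in atTop, log x ≠ 0 :=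
    (eventually_gt_atTop 1).mono fun x hx => (log_pos hx).ne'
  have hπ : (fun x => Nat.primeCounting ⌊x⌋₊ * log x - η * x) =o[atTop] fun x => x := by
    rw [isLittleO_iff_tendsto' ((eventually_ne_atTop 0).mono fun x hx h0 => absurd h0 hx)]
    refine (tendsto_sub_nhds_zero_iff.2 h).congr' ?_
    filter_upwards [eventually_ne_atTop 0] with x hx
    rw [sub_div, mul_div_cancel_right₀ _ hx, div_div_eq_mul_div]
  have hθ : (fun x => θ x - Nat.primeCounting ⌊x⌋₊ * log x) =o[atTop] fun x => x := by
    have hO := primeCounting_sub_theta_div_log_isBigO.mul (isBigO_refl log atTop)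
    refine (hO.trans_isLittleO ?_).neg_left.congr' ?_ EventuallyEq.rfl
    · refine isLittleO_div_log_id.congr' ?_ EventuallyEq.rfl
      filter_upwards [hlog] with x hx
      field_simp
    · filter_upwards [hlog] with x hx
      field_simp
      ring
  have hψ := isBigO_psi_sub_theta_sqrt.trans_isLittleO isLittleO_sqrt_id
  refine ((hψ.add hθ).add hπ).congr_left fun x => ?_
  simp only [Pi.sub_apply]
  ring

lemma log_factorial_eq_sum_psi (N : ℕ) : log (N ! : ℝ) = ∑ k ∈ Ioc 0 N, ψ (N / k : ℕ) := by
  have hlog : log (N ! : ℝ) = ∑ n ∈ Ioc 0 N, log n := by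
    induction N with
    | zero => simp
    | succ N ih =>
      rw [sum_Ioc_succ_top (Nat.zero_le N), ← ih, Nat.factorial_succ, Nat.cast_mul,
        log_mul (by positivity) (by positivity), add_comm]
  rw [hlog]
  simp_rw [← log_apply, ← vonMangoldt_mul_zeta, mul_comm Λ, sum_Ioc_mul_eq_sum_sum]
  refine sum_congr rfl fun k hk => ?_
  rw [natCoe_apply, zeta_apply_ne (mem_Ioc.1 hk).1.ne', Nat.cast_one, one_mul, psi,
    Nat.floor_natCast]

lemma isBigO_log_factorial_sub_mul_log :
    (fun N : ℕ => log (N ! : ℝ) - N * log N) =O[atTop] (fun N : ℕ => (N : ℝ)) := by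
  refine IsBigO.of_bound 1 ?_
  filter_upwards [eventually_ge_atTop 1] with N hN
  have hupper : log (N ! : ℝ) ≤ N * log N := by
    rw [← log_pow]
    exact log_le_log (by positivity) (by exact_mod_cast Nat.factorial_le_pow N)
  have hlower := Stirling.le_log_factorial_stirling (n := N) (by omega)
  have hlogN : 0 ≤ log (N : ℝ) := log_natCast_nonneg N
  have hlog2π : 0 ≤ log (2 * Real.pi) := log_nonneg (by linarith [Real.pi_gt_three])
  rw [norm_of_nonneg (Nat.cast_nonneg _), one_mul, Real.norm_eq_abs, abs_le]
  constructor <;> linarith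

lemma mul_harmonic_eq_sum_Ioc (N : ℕ) : N * (harmonic N : ℝ) = ∑ k ∈ Ioc 0 N, (N : ℝ) / k := by
  rw [harmonic_eq_sum_Icc, ← Finset.Icc_add_one_left_eq_Ioc, zero_add]
  push_cast
  rw [mul_sum]
  rfl

lemma mul_log_sub_le_sum_Ioc_div (N : ℕ) :
    N * log N - N ≤ ∑ k ∈ Ioc 0 N, ((N / k : ℕ) : ℝ) := by
  have hterm : ∀ k ∈ Ioc 0 N, (N : ℝ) / k - 1 ≤ ((N / k : ℕ) : ℝ) := by
    intro k hk
    have hk0 : (0 : ℝ) < k := by exact_mod_cast (mem_Ioc.1 hk).1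
    rw [sub_le_iff_le_add, div_le_iff₀ hk0]
    exact_mod_cast (Nat.lt_div_mul_add (a := N) (mem_Ioc.1 hk).1).le.trans_eq (by ring)
  calc (N : ℝ) * log N - N ≤ N * harmonic N - N := by
        gcongr
        rcases N.eq_zero_or_pos with rfl | hN
        · simp
        exact (log_le_log (by positivity) (by push_cast; linarith)).trans
          (log_add_one_le_harmonic N)
    _ = ∑ k ∈ Ioc 0 N, ((N : ℝ) / k - 1) := by
        simp [sum_sub_distrib, mul_harmonic_eq_sum_Ioc]
    _ ≤ _ := sum_le_sum hterm

lemma sum_Ioc_div_le (N : ℕ) : ∑ k ∈ Ioc 0 N, ((N / k : ℕ) : ℝ) ≤ N * (1 + log N) := by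
  calc ∑ k ∈ Ioc 0 N, ((N / k : ℕ) : ℝ) ≤ ∑ k ∈ Ioc 0 N, (N : ℝ) / k :=
        sum_le_sum fun k _ => Nat.cast_div_le
    _ = N * harmonic N := (mul_harmonic_eq_sum_Ioc N).symm
    _ ≤ N * (1 + log N) := by
        gcongr
        exact harmonic_le_one_add_log N

lemma isBigO_sum_Ioc_div_sub_mul_log :
    (fun N : ℕ => ∑ k ∈ Ioc 0 N, ((N / k : ℕ) : ℝ) - N * log N) =O[atTop]
      (fun N : ℕ => (N : ℝ)) := by
  refine IsBigO.of_bound 1 (Eventually.of_forall fun N => ?_)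
  rw [norm_of_nonneg (Nat.cast_nonneg _), one_mul, Real.norm_eq_abs, abs_le]
  constructor <;> linarith [mul_log_sub_le_sum_Ioc_div N, sum_Ioc_div_le N]

lemma isLittleO_natCast_mul_log :
    (fun N : ℕ => (N : ℝ)) =o[atTop] (fun N : ℕ => N * log N) := by
  have h := (isLittleO_const_log_atTop (c := 1)).comp_tendsto tendsto_natCast_atTop_atTop
  simpa using (isBigO_refl (fun N : ℕ => (N : ℝ)) atTop).mul_isLittleO h

lemma exists_forall_abs_le_mul_add {f : ℕ → ℝ} (hf : f =o[atTop] (fun n : ℕ => (n : ℝ)))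
    {ε : ℝ} (hε : 0 < ε) : ∃ C, ∀ n, |f n| ≤ ε * n + C := by
  obtain ⟨M, hM⟩ := eventually_atTop.1 (hf.bound hε)
  refine ⟨∑ n ∈ range M, |f n|, fun n => ?_⟩
  have hεn : 0 ≤ ε * n := by positivity
  rcases lt_or_ge n M with hn | hn
  · have := single_le_sum (fun i _ => abs_nonneg (f i)) (mem_range.2 hn)
    linarith
  · have := hM n hn
    rw [Real.norm_eq_abs, norm_of_nonneg (Nat.cast_nonneg _)] at this
    linarith [sum_nonneg fun i (_ : i ∈ range M) => abs_nonneg (f i)]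

-- The arguments `N / k` need not be large, so `f = o(n)` is only usable in the uniform form
-- `|f n| ≤ ε n + C`; summed over `k`, the constants cost `C N = o(N log N)`.
theorem Asymptotics.IsLittleO.sum_Ioc_div {f : ℕ → ℝ}
    (hf : f =o[atTop] (fun n : ℕ => (n : ℝ))) :
    (fun N : ℕ => ∑ k ∈ Ioc 0 N, f (N / k)) =o[atTop] (fun N : ℕ => N * log N) := by
  refine isLittleO_iff.2 fun c hc => ?_
  obtain ⟨C, hC⟩ := exists_forall_abs_le_mul_add hf (half_pos hc)
  have hlog : ∀ᶠ N : ℕ in atTop, (c / 2 + C) / (c / 2) ≤ log N :=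
    (tendsto_log_atTop.comp tendsto_natCast_atTop_atTop).eventually_ge_atTop _
  filter_upwards [hlog] with N hN
  rw [div_le_iff₀' (half_pos hc)] at hN
  have hN0 : (0 : ℝ) ≤ N := Nat.cast_nonneg N
  calc ‖∑ k ∈ Ioc 0 N, f (N / k)‖ ≤ ∑ k ∈ Ioc 0 N, (c / 2 * ((N / k : ℕ) : ℝ) + C) :=
        (norm_sum_le _ _).trans (sum_le_sum fun k _ => hC _)
    _ = c / 2 * ∑ k ∈ Ioc 0 N, ((N / k : ℕ) : ℝ) + C * N := by
        simp [sum_add_distrib, mul_sum, mul_comm]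
    _ ≤ c / 2 * (N * (1 + log N)) + C * N := by
        gcongr
        exact sum_Ioc_div_le N
    _ ≤ c * ‖(N : ℝ) * log N‖ := by
        rw [norm_of_nonneg (mul_nonneg hN0 (log_natCast_nonneg N))]
        nlinarith

theorem pnt_limit_is_one (η : ℝ)
    (h : Filter.Tendsto (fun x : ℝ => (Nat.primeCounting ⌊x⌋₊ : ℝ) / (x / Real.log x))
      Filter.atTop (nhds η)) : η = 1 := by
  have hψ : (fun n : ℕ => ψ n - η * n) =o[atTop] (fun n : ℕ => (n : ℝ)) :=
    (isLittleO_psi_sub_mul_of_tendsto_primeCounting h).comp_tendsto tendsto_natCast_atTop_atTop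
  have hchebyshev : (fun N : ℕ => log (N ! : ℝ) - η * ∑ k ∈ Ioc 0 N, ((N / k : ℕ) : ℝ))
      =o[atTop] (fun N : ℕ => N * log N) := by
    simpa [log_factorial_eq_sum_psi, mul_sum, sum_sub_distrib] using hψ.sum_Ioc_div
  have hstirling := isBigO_log_factorial_sub_mul_log.trans_isLittleO isLittleO_natCast_mul_log
  have hharmonic := isBigO_sum_Ioc_div_sub_mul_log.trans_isLittleO isLittleO_natCast_mul_log
  have hmain : (fun N : ℕ => (1 - η) * (N * log N)) =o[atTop] (fun N : ℕ => N * log N) :=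
    ((hchebyshev.sub hstirling).add (hharmonic.const_mul_left η)).congr_left fun N => by ring
  by_contra hη
  refine isLittleO_irrefl ?_ ((isLittleO_const_mul_left_iff (sub_ne_zero.2 (Ne.symm hη))).1 hmain)
  refine (eventually_gt_atTop 1).frequently.mono fun N hN => ?_
  have hN1 : (1 : ℝ) < N := by exact_mod_cast hN
  exact (mul_pos (by linarith) (log_pos hN1)).ne'
end

section
/- For complex numbers w, y, z in the closed unit disk, defining η(u,v) = √(1 − Re(u·conj(v))), one has η(w, y) ≤ η(w, z) + η(z, y). -/
/-!
Work in any real inner product space and put `a = 1 - ⟪u, x⟫`, `b = 1 - ⟪x, v⟫`,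
`c = 1 - ⟪u, v⟫`. Expanding `⟪u - x, x - v⟫` gives
`c = a + b - (1 - ‖x‖²) + ⟪u - x, x - v⟫ ≤ a + b + ‖u - x‖ ‖x - v‖`,
while `‖u - x‖² = ‖u‖² + ‖x‖² - 2⟪u, x⟫ ≤ 2a` and likewise `‖x - v‖² ≤ 2b` on the unit ball.
Hence `c ≤ a + b + 2√a√b = (√a + √b)²`. For `ℂ`, `Re (w * conj y) = ⟪w, y⟫_ℝ`.
-/

open RealInnerProductSpace

section UnitBall

variable {E : Type*} [NormedAddCommGroup E] [InnerProductSpace ℝ E]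

theorem norm_sub_sq_le_two_mul_one_sub_inner {u v : E} (hu : ‖u‖ ≤ 1) (hv : ‖v‖ ≤ 1) :
    ‖u - v‖ ^ 2 ≤ 2 * (1 - ⟪u, v⟫) := by
  rw [norm_sub_sq_real]
  nlinarith [norm_nonneg u, norm_nonneg v]

theorem norm_sub_le_sqrt_two_mul_sqrt_one_sub_inner {u v : E} (hu : ‖u‖ ≤ 1) (hv : ‖v‖ ≤ 1) :
    ‖u - v‖ ≤ √2 * √(1 - ⟪u, v⟫) := by
  rw [← Real.sqrt_mul zero_le_two, ← Real.sqrt_sq (norm_nonneg (u - v))]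
  exact Real.sqrt_le_sqrt (norm_sub_sq_le_two_mul_one_sub_inner hu hv)

theorem one_sub_inner_le_add_add_norm_mul_norm (u v : E) {x : E} (hx : ‖x‖ ≤ 1) :
    1 - ⟪u, v⟫ ≤ (1 - ⟪u, x⟫) + (1 - ⟪x, v⟫) + ‖u - x‖ * ‖x - v‖ := by
  have hexpand : ⟪u - x, x - v⟫ = ⟪u, x⟫ - ⟪u, v⟫ - ‖x‖ ^ 2 + ⟪x, v⟫ := by
    rw [inner_sub_left, inner_sub_right, inner_sub_right, real_inner_self_eq_norm_sq]
    ring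
  have hcs := real_inner_le_norm (u - x) (x - v)
  nlinarith [norm_nonneg x]

theorem sqrt_one_sub_inner_le_add {u v x : E} (hu : ‖u‖ ≤ 1) (hv : ‖v‖ ≤ 1) (hx : ‖x‖ ≤ 1) :
    √(1 - ⟪u, v⟫) ≤ √(1 - ⟪u, x⟫) + √(1 - ⟪x, v⟫) := by
  set a := 1 - ⟪u, x⟫
  set b := 1 - ⟪x, v⟫
  have ha : 0 ≤ a := by
    nlinarith [norm_sub_sq_le_two_mul_one_sub_inner hu hx, sq_nonneg ‖u - x‖]
  have hb : 0 ≤ b := by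
    nlinarith [norm_sub_sq_le_two_mul_one_sub_inner hx hv, sq_nonneg ‖x - v‖]
  have hprod : ‖u - x‖ * ‖x - v‖ ≤ 2 * √a * √b :=
    calc ‖u - x‖ * ‖x - v‖ ≤ (√2 * √a) * (√2 * √b) :=
          mul_le_mul (norm_sub_le_sqrt_two_mul_sqrt_one_sub_inner hu hx)
            (norm_sub_le_sqrt_two_mul_sqrt_one_sub_inner hx hv) (norm_nonneg _) (by positivity)
      _ = 2 * √a * √b := by
          rw [mul_mul_mul_comm, Real.mul_self_sqrt zero_le_two, mul_assoc]
  have hsq : 1 - ⟪u, v⟫ ≤ (√a + √b) ^ 2 := by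
    rw [add_sq, Real.sq_sqrt ha, Real.sq_sqrt hb]
    linarith [one_sub_inner_le_add_add_norm_mul_norm u v hx]
  exact Real.sqrt_le_iff.mpr ⟨by positivity, hsq⟩

end UnitBall

theorem eta_triangle (w y z : ℂ) (hw : ‖w‖ ≤ 1) (hy : ‖y‖ ≤ 1) (hz : ‖z‖ ≤ 1) :
    Real.sqrt (1 - (w * starRingEnd ℂ y).re)
      ≤ Real.sqrt (1 - (w * starRingEnd ℂ z).re)
        + Real.sqrt (1 - (z * starRingEnd ℂ y).re) := by
  rw [← Complex.inner, ← Complex.inner, ← Complex.inner, add_comm]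
  exact sqrt_one_sub_inner_le_add hy hw hz
end

section
/- The pretentious distance D(f, g; x), defined by D(f,g;x)^2 = Σ_{p ≤ x} (1 − Re(f(p)·conj(g(p))))/p for functions f, g from the primes to the closed unit disk, satisfies the triangle inequality D(f, h; x) ≤ D(f, g; x) + D(g, h; x). -/
/-!
For `‖w‖, ‖y‖ ≤ 1` the identity
`2 (1 - Re (w ȳ)) = ‖w - y‖² + (1 - ‖w‖²) + (1 - ‖y‖²)`
writes `√2 · η(w, y)` as the Euclidean length of a vector with three nonnegative squared entries.
Minkowski's inequality in three coordinates, with `1 - ‖z‖²` spent on both sides, gives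
`η(w, y) ≤ η(w, z) + η(z, y)`; Minkowski's inequality over the primes `p ≤ x`, each weighted by
`1 / p`, then sums these pointwise inequalities to the triangle inequality for `D`.
-/

open ComplexConjugate

theorem EuclideanSpace.norm_toLp_finset_coe {ι : Type*} (s : Finset ι) (F : ι → ℝ) :
    ‖(WithLp.toLp 2 fun i : s ↦ F i : EuclideanSpace ℝ s)‖ = √(∑ i ∈ s, F i ^ 2) := by
  rw [EuclideanSpace.norm_eq, ← Finset.sum_coe_sort s]
  simp

theorem Real.sqrt_sum_le_sqrt_sum_add_sqrt_sum {ι : Type*} (s : Finset ι) {a b c : ι → ℝ}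
    (ha : ∀ i ∈ s, 0 ≤ a i) (hb : ∀ i ∈ s, 0 ≤ b i)
    (hc : ∀ i ∈ s, √(c i) ≤ √(a i) + √(b i)) :
    √(∑ i ∈ s, c i) ≤ √(∑ i ∈ s, a i) + √(∑ i ∈ s, b i) := by
  let u : EuclideanSpace ℝ s := WithLp.toLp 2 fun i ↦ √(a i)
  let v : EuclideanSpace ℝ s := WithLp.toLp 2 fun i ↦ √(b i)
  calc √(∑ i ∈ s, c i) ≤ √(∑ i ∈ s, (√(a i) + √(b i)) ^ 2) :=
        Real.sqrt_le_sqrt <| Finset.sum_le_sum fun i hi ↦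
          (Real.sqrt_le_left (by positivity)).1 (hc i hi)
    _ = ‖u + v‖ := (EuclideanSpace.norm_toLp_finset_coe s fun i ↦ √(a i) + √(b i)).symm
    _ ≤ ‖u‖ + ‖v‖ := norm_add_le u v
    _ = √(∑ i ∈ s, √(a i) ^ 2) + √(∑ i ∈ s, √(b i) ^ 2) := by
      rw [EuclideanSpace.norm_toLp_finset_coe s fun i ↦ √(a i),
        EuclideanSpace.norm_toLp_finset_coe s fun i ↦ √(b i)]
    _ = √(∑ i ∈ s, a i) + √(∑ i ∈ s, b i) := by
      rw [Finset.sum_congr rfl fun i hi ↦ Real.sq_sqrt (ha i hi),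
        Finset.sum_congr rfl fun i hi ↦ Real.sq_sqrt (hb i hi)]

theorem Complex.two_mul_one_sub_re_mul_conj (w y : ℂ) :
    2 * (1 - (w * conj y).re) = ‖w - y‖ ^ 2 + (1 - ‖w‖ ^ 2) + (1 - ‖y‖ ^ 2) := by
  simp only [Complex.sq_norm, Complex.normSq_apply, Complex.mul_re, Complex.conj_re,
    Complex.conj_im, Complex.sub_re, Complex.sub_im]
  ring

theorem Complex.sqrt_one_sub_re_mul_conj_le {w y z : ℂ} (hw : ‖w‖ ≤ 1) (hy : ‖y‖ ≤ 1)
    (hz : ‖z‖ ≤ 1) :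
    √(1 - (w * conj y).re) ≤ √(1 - (w * conj z).re) + √(1 - (z * conj y).re) := by
  have key := Real.sqrt_sum_le_sqrt_sum_add_sqrt_sum Finset.univ
    (a := ![‖w - z‖ ^ 2, 1 - ‖w‖ ^ 2, 1 - ‖z‖ ^ 2])
    (b := ![‖z - y‖ ^ 2, 1 - ‖z‖ ^ 2, 1 - ‖y‖ ^ 2])
    (c := ![‖w - y‖ ^ 2, 1 - ‖w‖ ^ 2, 1 - ‖y‖ ^ 2]) ?_ ?_ ?_
  · simp only [Fin.sum_univ_three, Matrix.cons_val, ← two_mul_one_sub_re_mul_conj,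
      Real.sqrt_mul zero_le_two, ← mul_add] at key
    exact le_of_mul_le_mul_left key (by positivity)
  · intro i _
    fin_cases i <;> simp [sub_nonneg, hw, hz]
  · intro i _
    fin_cases i <;> simp [sub_nonneg, hy, hz]
  · intro i _
    fin_cases i
    · simpa [Real.sqrt_sq (norm_nonneg _)] using norm_sub_le_norm_sub_add_norm_sub w z y
    · exact le_add_of_nonneg_right (Real.sqrt_nonneg _)
    · exact le_add_of_nonneg_left (Real.sqrt_nonneg _)

theorem Complex.one_sub_re_mul_conj_nonneg {w y : ℂ} (hw : ‖w‖ ≤ 1) (hy : ‖y‖ ≤ 1) :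
    0 ≤ 1 - (w * conj y).re := by
  have : (w * conj y).re ≤ 1 :=
    calc (w * conj y).re ≤ ‖w * conj y‖ := Complex.re_le_norm _
      _ = ‖w‖ * ‖y‖ := by rw [norm_mul, Complex.norm_conj]
      _ ≤ 1 := mul_le_one₀ hw (norm_nonneg y) hy
  linarith

theorem Nat.prime_and_cast_le_of_mem_filter_range_floor_succ {x : ℝ} {p : ℕ}
    (hp : p ∈ (Finset.range (⌊x⌋₊ + 1)).filter Nat.Prime) : p.Prime ∧ (p : ℝ) ≤ x := by
  rw [Finset.mem_filter, Finset.mem_range, Nat.lt_succ_iff] at hp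
  exact ⟨hp.2, (Nat.le_floor_iff' hp.2.ne_zero).1 hp.1⟩

theorem pretentious_distance_triangle_general (x : ℝ) (f g h : ℕ → ℂ)
    (hf : ∀ p : ℕ, p.Prime → (p : ℝ) ≤ x → ‖f p‖ ≤ 1)
    (hg : ∀ p : ℕ, p.Prime → (p : ℝ) ≤ x → ‖g p‖ ≤ 1)
    (hh : ∀ p : ℕ, p.Prime → (p : ℝ) ≤ x → ‖h p‖ ≤ 1) :
    Real.sqrt (∑ p ∈ (Finset.range (⌊x⌋₊ + 1)).filter Nat.Prime,
        (1 - (f p * starRingEnd ℂ (h p)).re) / p)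
      ≤ Real.sqrt (∑ p ∈ (Finset.range (⌊x⌋₊ + 1)).filter Nat.Prime,
          (1 - (f p * starRingEnd ℂ (g p)).re) / p)
        + Real.sqrt (∑ p ∈ (Finset.range (⌊x⌋₊ + 1)).filter Nat.Prime,
            (1 - (g p * starRingEnd ℂ (h p)).re) / p) := by
  refine Real.sqrt_sum_le_sqrt_sum_add_sqrt_sum _ (fun p hp ↦ ?_) (fun p hp ↦ ?_) (fun p hp ↦ ?_)
    <;> obtain ⟨hp, hpx⟩ := Nat.prime_and_cast_le_of_mem_filter_range_floor_succ hp
  · exact div_nonneg (Complex.one_sub_re_mul_conj_nonneg (hf p hp hpx) (hg p hp hpx)) p.cast_nonneg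
  · exact div_nonneg (Complex.one_sub_re_mul_conj_nonneg (hg p hp hpx) (hh p hp hpx)) p.cast_nonneg
  · simp only [Real.sqrt_div' _ p.cast_nonneg, ← add_div]
    gcongr
    exact Complex.sqrt_one_sub_re_mul_conj_le (hf p hp hpx) (hh p hp hpx) (hg p hp hpx)

theorem pretentious_distance_triangle (x : ℝ) (hx : 2 ≤ x) (f g h : ℕ → ℂ)
    (hf : ∀ p : ℕ, p.Prime → (p : ℝ) ≤ x → ‖f p‖ ≤ 1)
    (hg : ∀ p : ℕ, p.Prime → (p : ℝ) ≤ x → ‖g p‖ ≤ 1)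
    (hh : ∀ p : ℕ, p.Prime → (p : ℝ) ≤ x → ‖h p‖ ≤ 1) :
    Real.sqrt (∑ p ∈ (Finset.range (⌊x⌋₊ + 1)).filter Nat.Prime,
        (1 - (f p * starRingEnd ℂ (h p)).re) / p)
      ≤ Real.sqrt (∑ p ∈ (Finset.range (⌊x⌋₊ + 1)).filter Nat.Prime,
          (1 - (f p * starRingEnd ℂ (g p)).re) / p)
        + Real.sqrt (∑ p ∈ (Finset.range (⌊x⌋₊ + 1)).filter Nat.Prime,
            (1 - (g p * starRingEnd ℂ (h p)).re) / p) :=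
  pretentious_distance_triangle_general x f g h hf hg hh
end
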